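/- arXiv:2205.13468 — 6 statements merged into one kernel-verified Lean document; each statement's English description precedes it below -/
import Mathlib

section
/- For real y with |y| ≤ 1/2 and real ρ ≥ 0, the real part of (1+iy)^(−ρ) is at most 1 − ψ(ρ)·y², where ψ(ρ) = (2/5)ρ if 0 ≤ ρ ≤ 1 and ψ(ρ) = 2/5 if ρ ≥ 1. -/
open Complex

/-- Core real inequality: `1/√(1+t) ≤ 1 - (2/5) t` for `t ∈ [0, 1/4]`. -/
lemma aux_sqrt_bound {t : ℝ} (ht0 : 0 ≤ t) (ht : t ≤ 1 / 4) :
    1 / Real.sqrt (1 + t) ≤ 1 - 2 / 5 * t := by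
  have hpos : (0 : ℝ) < 1 + t := by linarith
  have hs : 0 < Real.sqrt (1 + t) := Real.sqrt_pos.mpr hpos
  rw [div_le_iff₀ hs]
  have hsq : Real.sqrt (1 + t) ^ 2 = 1 + t := Real.sq_sqrt hpos.le
  nlinarith [hs, hsq, sq_nonneg (Real.sqrt (1 + t) - 1), sq_nonneg t]

/-- For real `y` with `|y| ≤ 1/2` and real `ρ ≥ 0`,
`Re((1+iy)^(−ρ)) ≤ 1 − ψ(ρ) y²` where `ψ(ρ) = (2/5)ρ` for `0 ≤ ρ ≤ 1` and `ψ(ρ) = 2/5`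
for `ρ ≥ 1`. -/
theorem re_cpow_neg_rho_bound (y ρ : ℝ) (hy : |y| ≤ 1 / 2) (hρ : 0 ≤ ρ) :
    (((1 : ℂ) + (y : ℂ) * Complex.I) ^ (-(ρ : ℂ))).re ≤
      1 - (if ρ ≤ 1 then 2 / 5 * ρ else 2 / 5) * y ^ 2 := by
  set z : ℂ := (1 : ℂ) + (y : ℂ) * Complex.I with hz
  have hzre : z.re = 1 := by simp [hz]
  have hzim : z.im = y := by simp [hz]
  have hzne : z ≠ 0 := fun h => by simp [h] at hzre
  -- |z| = √(1 + y²)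
  have habs : ‖z‖ = Real.sqrt (1 + y ^ 2) := by
    rw [Complex.norm_def, Complex.normSq_apply, hzre, hzim]
    ring_nf
  have ht0 : (0 : ℝ) ≤ y ^ 2 := sq_nonneg y
  have ht : y ^ 2 ≤ 1 / 4 := by
    have := abs_le.mp hy
    nlinarith [this.1, this.2]
  have hpos : (0 : ℝ) < 1 + y ^ 2 := by linarith
  have hs : 0 < Real.sqrt (1 + y ^ 2) := Real.sqrt_pos.mpr hpos
  have hs1 : 1 ≤ Real.sqrt (1 + y ^ 2) := by
    nlinarith [Real.sq_sqrt hpos.le, hs]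
  set a : ℝ := 1 / Real.sqrt (1 + y ^ 2) with ha
  have ha0 : 0 < a := by positivity
  have ha1 : a ≤ 1 := by
    rw [ha, div_le_one hs]; exact hs1
  have hakey : a ≤ 1 - 2 / 5 * y ^ 2 := aux_sqrt_bound ht0 ht
  -- Step 1: Re ≤ |·|
  have h1 : (z ^ (-(ρ : ℂ))).re ≤ ‖z ^ (-(ρ : ℂ))‖ := Complex.re_le_norm _
  -- Step 2: compute the modulus
  have h2 : ‖z ^ (-(ρ : ℂ))‖ = a ^ ρ := by
    rw [Complex.norm_cpow_of_ne_zero hzne]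
    simp only [Complex.neg_re, Complex.ofReal_re, Complex.neg_im, Complex.ofReal_im, neg_zero,
      mul_zero, Real.exp_zero, div_one]
    rw [habs, ha, Real.rpow_neg hs.le, one_div, ← Real.inv_rpow hs.le]
  refine h1.trans (h2.le.trans ?_)
  by_cases hρ1 : ρ ≤ 1
  · -- Bernoulli: a^ρ ≤ 1 + ρ(a-1)
    rw [if_pos hρ1]
    have hb : a ^ ρ ≤ 1 + ρ * (a - 1) := by
      have := rpow_one_add_le_one_add_mul_self (s := a - 1) (by linarith) hρ hρ1
      simpa using this
    have : ρ * (a - 1) ≤ -(2 / 5 * ρ * y ^ 2) := by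
      have h : a - 1 ≤ -(2 / 5 * y ^ 2) := by linarith
      have := mul_le_mul_of_nonneg_left h hρ
      linarith [this]
    linarith
  · rw [if_neg hρ1]
    push_neg at hρ1
    have : a ^ ρ ≤ a ^ (1 : ℝ) :=
      Real.rpow_le_rpow_of_exponent_ge ha0 ha1 hρ1.le
    rw [Real.rpow_one] at this
    linarith
end

section
/- For all real a, r ≥ 0 and c > 0, the integral from a to infinity of e^(−cx)·x^r dx is bounded by a constant (depending only on r) times c^(−r−1)·((ac)^r + 1)·e^(−ac). -/
open MeasureTheory Set Real Filter Topology

/-- For all real `a, r ≥ 0` and `c > 0`,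
`∫_a^∞ e^(−cx) x^r dx ≪_r c^(−r−1)((ac)^r + 1) e^(−ac)`. -/
theorem incomplete_gamma_tail_bound (r : ℝ) (hr : 0 ≤ r) :
    ∃ C : ℝ, 0 < C ∧ ∀ a : ℝ, 0 ≤ a → ∀ c : ℝ, 0 < c →
      (∫ x in Set.Ioi a, Real.exp (-c * x) * x ^ r) ≤
        C * c ^ (-r - 1) * ((a * c) ^ r + 1) * Real.exp (-a * c) := by
  have hΓ : 0 < Real.Gamma (r + 1) := Real.Gamma_pos_of_pos (by linarith)
  refine ⟨2 ^ r * (Real.Gamma (r + 1) + 1), by positivity, fun a ha c hc => ?_⟩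
  -- integral of exp(-c x) over Ioi a
  have hI1 : ∫ x in Ioi a, Real.exp (-c * x) = Real.exp (-c * a) / c := by
    have := integral_Ioi_of_hasDerivAt_of_tendsto'
      (f := fun x => -Real.exp (-c * x) / c) (f' := fun x => Real.exp (-c * x)) (a := a) (m := 0)
      (fun x _ => by
        simpa [hc.ne', mul_comm, mul_div_assoc] using
          (((hasDerivAt_id x).const_mul (-c)).exp.neg.div_const c))
      (exp_neg_integrableOn_Ioi a hc)
      (by
        have : Tendsto (fun x : ℝ => -Real.exp (-c * x) / c) atTop (𝓝 (-0 / c)) :=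
          ((tendsto_exp_atBot.comp (tendsto_id.const_mul_atTop_of_neg (by linarith))).neg).div_const c
        simpa using this)
    rw [this]; ring
  -- integrability on Ioi 0 of exp(-c x) x^r
  have hInt0 : IntegrableOn (fun x : ℝ => Real.exp (-c * x) * x ^ r) (Ioi 0) := by
    have := integrableOn_rpow_mul_exp_neg_mul_rpow (by linarith : (-1:ℝ) < r) (zero_lt_one : (0:ℝ) < 1) hc
    simp only [Real.rpow_one] at this
    exact this.congr_fun (fun x _ => mul_comm _ _) measurableSet_Ioi
  -- value of that integral
  have hI2 : ∫ x in Ioi 0, Real.exp (-c * x) * x ^ r = (1 / c) ^ (r + 1) * Real.Gamma (r + 1) := by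
    rw [← Real.integral_rpow_mul_exp_neg_mul_Ioi (by linarith : (0:ℝ) < r + 1) hc]
    refine setIntegral_congr_fun measurableSet_Ioi (fun x _ => ?_)
    rw [add_sub_cancel_right, neg_mul, mul_comm]
  -- translation
  have emb : MeasurableEmbedding (fun x : ℝ => x + a) :=
    (MeasurableEquiv.addRight a).measurableEmbedding
  have hmp : MeasurePreserving (fun x : ℝ => x + a) volume volume :=
    measurePreserving_add_right volume a
  have hpre : (fun x : ℝ => x + a) ⁻¹' (Ioi a) = Ioi 0 := by
    ext x; simp [lt_add_iff_pos_left]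
  have hI3 : ∫ x in Ioi a, Real.exp (-c * (x - a)) * (x - a) ^ r
      = (1 / c) ^ (r + 1) * Real.Gamma (r + 1) := by
    rw [← hmp.setIntegral_preimage_emb emb
      (fun x => Real.exp (-c * (x - a)) * (x - a) ^ r) (Ioi a), hpre]
    simpa using hI2
  have hIntA : IntegrableOn (fun x : ℝ => Real.exp (-c * (x - a)) * (x - a) ^ r) (Ioi a) := by
    have := (hmp.restrict_preimage_emb emb (Ioi a)).integrable_comp_emb emb
      (g := fun x => Real.exp (-c * (x - a)) * (x - a) ^ r)
    rw [hpre] at this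
    rw [IntegrableOn, ← this]
    exact hInt0.congr_fun (fun x _ => by simp) measurableSet_Ioi
  -- the dominating function
  set g : ℝ → ℝ := fun x => 2 ^ r * (a ^ r * Real.exp (-c * x)
      + Real.exp (-a * c) * (Real.exp (-c * (x - a)) * (x - a) ^ r)) with hg
  have hgint : IntegrableOn g (Ioi a) := by
    exact (((exp_neg_integrableOn_Ioi a hc).const_mul _).add (hIntA.const_mul _)).const_mul _
  have hbound : ∀ x ∈ Ioi a, Real.exp (-c * x) * x ^ r ≤ g x := by
    intro x hx
    have hx' : a < x := hx
    have hxa : (0:ℝ) ≤ x - a := by linarith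
    have hxr : x ^ r ≤ 2 ^ r * (a ^ r + (x - a) ^ r) := by
      have h1 : x ≤ 2 * max a (x - a) := by
        rcases le_total a (x - a) with h | h
        · rw [max_eq_right h]; linarith
        · rw [max_eq_left h]; linarith
      have h2 : x ^ r ≤ (2 * max a (x - a)) ^ r :=
        Real.rpow_le_rpow (by linarith) h1 hr
      have h3 : (2 * max a (x - a)) ^ r = 2 ^ r * (max a (x - a)) ^ r :=
        Real.mul_rpow (by norm_num) (le_max_of_le_left ha)
      have h4 : (max a (x - a)) ^ r ≤ a ^ r + (x - a) ^ r := by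
        rcases max_cases a (x - a) with ⟨h, _⟩ | ⟨h, _⟩ <;> rw [h] <;>
          [nlinarith [Real.rpow_nonneg hxa r]; nlinarith [Real.rpow_nonneg ha r]]
      calc x ^ r ≤ (2 * max a (x - a)) ^ r := h2
        _ = 2 ^ r * (max a (x - a)) ^ r := h3
        _ ≤ 2 ^ r * (a ^ r + (x - a) ^ r) :=
            mul_le_mul_of_nonneg_left h4 (Real.rpow_nonneg (by norm_num) r)
    have hexp : Real.exp (-c * x) = Real.exp (-a * c) * Real.exp (-c * (x - a)) := by
      rw [← Real.exp_add]; ring_nf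
    calc Real.exp (-c * x) * x ^ r
        ≤ Real.exp (-c * x) * (2 ^ r * (a ^ r + (x - a) ^ r)) :=
          mul_le_mul_of_nonneg_left hxr (Real.exp_pos _).le
      _ = g x := by rw [hg]; simp only []; rw [hexp]; ring
  have hmono : (∫ x in Ioi a, Real.exp (-c * x) * x ^ r) ≤ ∫ x in Ioi a, g x := by
    refine integral_mono_of_nonneg ?_ hgint ?_
    · rw [EventuallyLE, ae_restrict_iff' measurableSet_Ioi]
      filter_upwards with x hx
      have hx0 : (0:ℝ) ≤ x := le_trans ha (le_of_lt hx)
      exact mul_nonneg (Real.exp_pos _).le (Real.rpow_nonneg hx0 r)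
    · rw [EventuallyLE, ae_restrict_iff' measurableSet_Ioi]
      filter_upwards with x hx using hbound x hx
  have hIg : ∫ x in Ioi a, g x
      = 2 ^ r * (a ^ r * (Real.exp (-c * a) / c)
        + Real.exp (-a * c) * ((1 / c) ^ (r + 1) * Real.Gamma (r + 1))) := by
    simp only [hg]
    rw [integral_const_mul, integral_add ((exp_neg_integrableOn_Ioi a hc).const_mul _)
      (hIntA.const_mul _), integral_const_mul, integral_const_mul, hI1, hI3]
  refine hmono.trans ?_
  rw [hIg]
  -- now pure arithmetic
  have har : a ^ r = (a * c) ^ r * c ^ (-r - 1) * c := by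
    rw [Real.mul_rpow ha hc.le, Real.rpow_sub hc, Real.rpow_neg hc.le, Real.rpow_one]
    field_simp
  have h1c : (1 / c) ^ (r + 1) = c ^ (-r - 1) := by
    rw [one_div, ← Real.rpow_neg_one c, ← Real.rpow_mul hc.le]
    ring_nf
  rw [har, h1c]
  have hE : Real.exp (-c * a) = Real.exp (-a * c) := by ring_nf
  rw [hE]
  have hcc : (a * c) ^ r * c ^ (-r - 1) * c * (Real.exp (-a * c) / c)
      = (a * c) ^ r * c ^ (-r - 1) * Real.exp (-a * c) := by
    field_simp
  rw [hcc]
  have hT : 0 ≤ (a * c) ^ r := Real.rpow_nonneg (by positivity) r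
  have hP : (0:ℝ) < c ^ (-r - 1) := Real.rpow_pos_of_pos hc _
  have hEp : (0:ℝ) < Real.exp (-a * c) := Real.exp_pos _
  calc 2 ^ r * ((a * c) ^ r * c ^ (-r - 1) * Real.exp (-a * c)
        + Real.exp (-a * c) * (c ^ (-r - 1) * Real.Gamma (r + 1)))
      = 2 ^ r * (c ^ (-r - 1) * Real.exp (-a * c)) * ((a * c) ^ r + Real.Gamma (r + 1)) := by
        ring
    _ ≤ 2 ^ r * (c ^ (-r - 1) * Real.exp (-a * c))
        * ((Real.Gamma (r + 1) + 1) * ((a * c) ^ r + 1)) := by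
        have h2 : (0:ℝ) ≤ 2 ^ r * (c ^ (-r - 1) * Real.exp (-a * c)) := by positivity
        have : (a * c) ^ r + Real.Gamma (r + 1)
            ≤ (Real.Gamma (r + 1) + 1) * ((a * c) ^ r + 1) := by nlinarith
        exact mul_le_mul_of_nonneg_left this h2
    _ = 2 ^ r * (Real.Gamma (r + 1) + 1) * c ^ (-r - 1) * ((a * c) ^ r + 1)
        * Real.exp (-a * c) := by ring
end

section
/- For complex z and nonnegative integers j1, j2, j3 with j1+j2+j3 ≤ 2r (r a nonnegative integer), summing the signed multinomial coefficients over j3 gives: ∑_{j3=0}^{2r−j1−j2−j4} binom(z; j1,j2,j3,j4)·(−1)^{j3} = binom(z; j1,j2,j4)·binom(2r−z, 2r−j1−j2−j4), where binom(z; ...) denotes the generalized multinomial coefficient z(z−1)···(z−ℓ+1)/(j1!j2!···) with ℓ the sum of the lower indices. -/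
/-- The generalized binomial coefficient `z(z−1)⋯(z−n+1)/n!` for complex `z`. -/
noncomputable def genBinomC (z : ℂ) (n : ℕ) : ℂ :=
  (∏ i ∈ Finset.range n, (z - i)) / n.factorial

/-- The generalized multinomial coefficient `z(z−1)⋯(z−ℓ+1)/(j₁!⋯jₘ!)` where `ℓ` is the
sum of the lower indices. -/
noncomputable def genMultinomC (z : ℂ) (l : List ℕ) : ℂ :=
  (∏ i ∈ Finset.range l.sum, (z - i)) / (l.map Nat.factorial).prod

lemma genBinomC_pascal (a : ℂ) (k : ℕ) :
    genBinomC (a + 1) (k + 1) = genBinomC a k + genBinomC a (k + 1) := by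
  unfold genBinomC
  have h1 : ∏ i ∈ Finset.range (k + 1), (a + 1 - i)
      = (a + 1) * ∏ i ∈ Finset.range k, (a - i) := by
    rw [Finset.prod_range_succ']
    rw [show (∏ i ∈ Finset.range k, (a + 1 - ↑(i + 1))) = ∏ i ∈ Finset.range k, (a - i) from
      Finset.prod_congr rfl (fun i _ => by push_cast; ring)]
    push_cast; ring
  rw [h1, Finset.prod_range_succ, Nat.factorial_succ]
  have hk : (k.factorial : ℂ) ≠ 0 := Nat.cast_ne_zero.2 k.factorial_ne_zero
  have hk1 : ((k : ℂ) + 1) ≠ 0 := Nat.cast_add_one_ne_zero k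
  push_cast
  field_simp
  ring

lemma genBinomC_reflect (w : ℂ) (n : ℕ) :
    genBinomC ((n : ℂ) - w) (n + 1) = (-1) ^ (n + 1) * genBinomC w (n + 1) := by
  unfold genBinomC
  have key : ∏ i ∈ Finset.range (n + 1), ((n : ℂ) - w - i)
      = (-1) ^ (n + 1) * ∏ i ∈ Finset.range (n + 1), (w - i) := by
    calc ∏ i ∈ Finset.range (n + 1), ((n : ℂ) - w - i)
        = ∏ j ∈ Finset.range (n + 1), (-1) * (w - ↑(n + 1 - 1 - j)) := by
          refine Finset.prod_congr rfl fun j hj => ?_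
          have hjn : j ≤ n := Nat.lt_succ_iff.mp (Finset.mem_range.mp hj)
          have : n + 1 - 1 - j = n - j := by omega
          rw [this, Nat.cast_sub hjn]
          ring
      _ = ∏ j ∈ Finset.range (n + 1), (-1) * (w - j) :=
          Finset.prod_range_reflect (fun j => (-1) * (w - j)) (n + 1)
      _ = (-1) ^ (n + 1) * ∏ i ∈ Finset.range (n + 1), (w - i) := by
          rw [Finset.prod_mul_distrib, Finset.prod_const, Finset.card_range]
  rw [key, mul_div_assoc]

lemma sum_alt_genBinomC (w : ℂ) (n : ℕ) :
    ∑ k ∈ Finset.range (n + 1), (-1 : ℂ) ^ k * genBinomC w k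
      = genBinomC ((n : ℂ) - w) n := by
  induction n with
  | zero => simp [genBinomC]
  | succ n ih =>
    rw [Finset.sum_range_succ, ih]
    have hp := genBinomC_pascal ((n : ℂ) - w) n
    have hr := genBinomC_reflect w n
    have hc : ((n + 1 : ℕ) : ℂ) - w = ((n : ℂ) - w) + 1 := by push_cast; ring
    rw [hc, hp, hr]

lemma genMultinomC_factor (z : ℂ) (j1 j2 j3 j4 : ℕ) :
    genMultinomC z [j1, j2, j3, j4] =
      genMultinomC z [j1, j2, j4] * genBinomC (z - ((j1 : ℂ) + j2 + j4)) j3 := by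
  unfold genMultinomC genBinomC
  simp only [List.sum_cons, List.sum_nil, List.map_cons, List.map_nil, List.prod_cons,
    List.prod_nil]
  have hsum : j1 + (j2 + (j3 + (j4 + 0))) = (j1 + (j2 + (j4 + 0))) + j3 := by omega
  rw [hsum, Finset.prod_range_add]
  rw [show (∏ i ∈ Finset.range j3, (z - ↑(j1 + (j2 + (j4 + 0)) + i)))
      = ∏ i ∈ Finset.range j3, (z - ((j1 : ℂ) + j2 + j4) - i) from
    Finset.prod_congr rfl (fun i _ => by push_cast; ring)]
  have h1 : (j1.factorial : ℂ) ≠ 0 := Nat.cast_ne_zero.2 j1.factorial_ne_zero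
  have h2 : (j2.factorial : ℂ) ≠ 0 := Nat.cast_ne_zero.2 j2.factorial_ne_zero
  have h3 : (j3.factorial : ℂ) ≠ 0 := Nat.cast_ne_zero.2 j3.factorial_ne_zero
  have h4 : (j4.factorial : ℂ) ≠ 0 := Nat.cast_ne_zero.2 j4.factorial_ne_zero
  field_simp
  push_cast; ring

/-- Summing the signed multinomial coefficients over `j₃`:
`∑_{j₃=0}^{2r−j₁−j₂−j₄} binom(z; j₁,j₂,j₃,j₄)(−1)^{j₃}
 = binom(z; j₁,j₂,j₄) binom(2r−z, 2r−j₁−j₂−j₄)`. -/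
theorem multinomial_j3_sum (r j1 j2 j4 : ℕ) (h : j1 + j2 + j4 ≤ 2 * r) (z : ℂ) :
    ∑ j3 ∈ Finset.range (2 * r - j1 - j2 - j4 + 1),
        genMultinomC z [j1, j2, j3, j4] * (-1 : ℂ) ^ j3 =
      genMultinomC z [j1, j2, j4] * genBinomC (2 * r - z) (2 * r - j1 - j2 - j4) := by
  have hcast : ((2 * r - j1 - j2 - j4 : ℕ) : ℂ) = 2 * r - j1 - j2 - j4 := by
    have e1 : j1 ≤ 2 * r := by omega
    have e2 : j2 ≤ 2 * r - j1 := by omega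
    have e3 : j4 ≤ 2 * r - j1 - j2 := by omega
    rw [Nat.cast_sub e3, Nat.cast_sub e2, Nat.cast_sub e1]
    push_cast; ring
  calc ∑ j3 ∈ Finset.range (2 * r - j1 - j2 - j4 + 1),
        genMultinomC z [j1, j2, j3, j4] * (-1 : ℂ) ^ j3
      = genMultinomC z [j1, j2, j4] *
        ∑ j3 ∈ Finset.range (2 * r - j1 - j2 - j4 + 1),
          (-1 : ℂ) ^ j3 * genBinomC (z - ((j1 : ℂ) + j2 + j4)) j3 := by
        rw [Finset.mul_sum]
        refine Finset.sum_congr rfl fun j3 _ => ?_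
        rw [genMultinomC_factor]
        ring
    _ = genMultinomC z [j1, j2, j4] *
        genBinomC (((2 * r - j1 - j2 - j4 : ℕ) : ℂ) - (z - ((j1 : ℂ) + j2 + j4)))
          (2 * r - j1 - j2 - j4) := by
        rw [sum_alt_genBinomC]
    _ = genMultinomC z [j1, j2, j4] * genBinomC (2 * r - z) (2 * r - j1 - j2 - j4) := by
        rw [hcast]
        congr 2
        ring
end

section
/- In the formal power series ring ℚ[[x]], let y = (1+x)^(1/2) = ∑_j binom(1/2,j) x^j. Then for every positive integer m, the coefficient of x^j in (1+y)^m is zero whenever ⌊m/2⌋ + 1 ≤ j ≤ m − 1. -/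
open PowerSeries

/-- The generalized binomial coefficient `z(z−1)⋯(z−n+1)/n!` for rational `z`. -/
def genBinomQ (z : ℚ) (n : ℕ) : ℚ :=
  (∏ i ∈ Finset.range n, (z - i)) / n.factorial

/-- The binomial series `(1+x)^z = ∑_j binom(z,j) x^j` in `ℚ[[x]]`. -/
noncomputable def binSeries (z : ℚ) : PowerSeries ℚ := PowerSeries.mk (genBinomQ z)

lemma descPochhammer_smeval_eq_prod (z : ℚ) (n : ℕ) :
    (descPochhammer ℤ n).smeval z = ∏ i ∈ Finset.range n, (z - i) := by
  induction n with
  | zero => simp [descPochhammer_zero]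
  | succ n ih =>
      rw [descPochhammer_succ_right, Polynomial.smeval_mul, ih, Finset.prod_range_succ]
      congr 1
      simp [Polynomial.smeval_sub, Polynomial.smeval_X, Polynomial.smeval_natCast]

lemma genBinomQ_eq_choose (z : ℚ) (n : ℕ) : genBinomQ z n = Ring.choose z n := by
  have h := Ring.descPochhammer_eq_factorial_smul_choose z n
  rw [descPochhammer_smeval_eq_prod] at h
  have hf : (n.factorial : ℚ) ≠ 0 := by exact_mod_cast n.factorial_ne_zero
  rw [genBinomQ, h, nsmul_eq_mul, mul_comm, mul_div_assoc, div_self hf, mul_one]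

lemma binSeries_half_sq : binSeries (1 / 2) ^ 2 = 1 + X := by
  ext n
  rw [sq, binSeries, PowerSeries.coeff_mul]
  simp_rw [coeff_mk, genBinomQ_eq_choose]
  have h : (∑ p ∈ Finset.HasAntidiagonal.antidiagonal n, Ring.choose (1/2 : ℚ) p.1 * Ring.choose (1/2 : ℚ) p.2)
      = Ring.choose ((1/2 : ℚ) + 1/2) n := (Ring.add_choose_eq n (Commute.all _ _)).symm
  rw [h, show (1/2 : ℚ) + 1/2 = ((1:ℕ):ℚ) by norm_num, Ring.choose_natCast]
  rcases n with _ | _ | n <;>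
    simp [PowerSeries.coeff_one, PowerSeries.coeff_X, Nat.choose_eq_zero_of_lt]

/-- With `y = (1+x)^(1/2) ∈ ℚ[[x]]` and `m ≥ 1`, the coefficient of `x^j` in `(1+y)^m`
vanishes for `⌊m/2⌋ + 1 ≤ j ≤ m − 1`. -/
theorem coeff_one_add_sqrt_pow_eq_zero (m : ℕ) (hm : 1 ≤ m) (j : ℕ)
    (h1 : m / 2 + 1 ≤ j) (h2 : j ≤ m - 1) :
    PowerSeries.coeff j ((1 + binSeries (1 / 2)) ^ m) = 0 := by
  set y := binSeries (1 / 2) with hy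
  have hy2 : y ^ 2 = 1 + X := binSeries_half_sq
  have hc0 : constantCoeff y = 1 := by
    rw [hy, binSeries, ← coeff_zero_eq_constantCoeff_apply, coeff_mk]
    simp [genBinomQ]
  have hc : constantCoeff (1 - y) = 0 := by rw [map_sub, map_one, hc0, sub_self]
  have hdvd : (X : ℚ⟦X⟧) ^ m ∣ (1 - y) ^ m :=
    pow_dvd_pow_of_dvd (PowerSeries.X_dvd_iff.mpr hc) m
  have hlow : PowerSeries.coeff j ((1 - y) ^ m) = 0 :=
    PowerSeries.X_pow_dvd_iff.mp hdvd j (by omega)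
  have hsum : PowerSeries.coeff j ((1 + y) ^ m + (1 - y) ^ m) = 0 := by
    have e1 : (1 + y) ^ m = ∑ k ∈ Finset.range (m + 1),
        y ^ k * 1 ^ (m - k) * (m.choose k : ℚ⟦X⟧) := by
      rw [add_comm, add_pow]
    have e2 : (1 - y) ^ m = ∑ k ∈ Finset.range (m + 1),
        (-y) ^ k * 1 ^ (m - k) * (m.choose k : ℚ⟦X⟧) := by
      rw [sub_eq_add_neg, add_comm, add_pow]
    rw [e1, e2, ← Finset.sum_add_distrib, map_sum]
    apply Finset.sum_eq_zero
    intro k hk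
    rw [Finset.mem_range] at hk
    simp only [one_pow, mul_one]
    rw [← add_mul]
    rcases Nat.even_or_odd k with he | ho
    · rw [he.neg_pow, ← two_mul]
      obtain ⟨i, hi⟩ := he
      have hyk : y ^ k = (1 + X) ^ i := by
        rw [show k = 2 * i by omega, pow_mul, hy2]
      have hji : i < j := by omega
      have hcoeff : PowerSeries.coeff j ((1 + X : ℚ⟦X⟧) ^ i) = 0 := by
        rw [add_comm, add_pow]
        simp only [one_pow, mul_one, map_sum]
        apply Finset.sum_eq_zero
        intro r hr
        rw [Finset.mem_range] at hr
        rw [show ((i.choose r : ℚ⟦X⟧)) = C (R := ℚ) (i.choose r) from (map_natCast (C (R := ℚ)) _).symm,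
          mul_comm, PowerSeries.coeff_C_mul, PowerSeries.coeff_X_pow, if_neg (by omega),
          mul_zero]
      rw [hyk,
        show (2 : ℚ⟦X⟧) = C (R := ℚ) 2 from (map_ofNat (C (R := ℚ)) 2).symm,
        show ((m.choose k : ℚ⟦X⟧)) = C (R := ℚ) (m.choose k) from (map_natCast (C (R := ℚ)) _).symm,
        mul_right_comm, ← map_mul, PowerSeries.coeff_C_mul, hcoeff, mul_zero]
    · rw [ho.neg_pow]
      simp
  have : PowerSeries.coeff j ((1 + y) ^ m)
      = PowerSeries.coeff j ((1 + y) ^ m + (1 - y) ^ m)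
        - PowerSeries.coeff j ((1 - y) ^ m) := by
    rw [map_add]; ring
  rw [this, hsum, hlow, sub_zero]
end

section
/- For nonnegative integers m, ℓ and a sequence (a_j) of complex numbers, A_{m,ℓ}(a_2, a_3, a_4, ...) = ∑_{j=0}^{ℓ} (−a_1)^{ℓ−j} · binom(ℓ, j) · A_{m+j, j}(a_1, a_2, a_3, ...), where A denotes the De Moivre polynomial. -/
/-- The De Moivre polynomial `A_{n,k}(a₁, a₂, …)`: the coefficient of `x^n`
in `(a₁x + a₂x² + ⋯)^k`, where `a : ℕ → ℂ` gives `aⱼ = a j` for `j ≥ 1`. -/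
noncomputable def deMoivre (n k : ℕ) (a : ℕ → ℂ) : ℂ :=
  PowerSeries.coeff n ((PowerSeries.mk fun j => if j = 0 then 0 else a j) ^ k)

/-- `A_{m,ℓ}(a₂, a₃, …) = ∑_{j=0}^{ℓ} (−a₁)^{ℓ−j} binom(ℓ,j) A_{m+j,j}(a₁, a₂, …)`. -/
theorem deMoivre_tail_shift (m ℓ : ℕ) (a : ℕ → ℂ) :
    deMoivre m ℓ (fun j => a (j + 1)) =
      ∑ j ∈ Finset.range (ℓ + 1),
        (-a 1) ^ (ℓ - j) * (ℓ.choose j : ℂ) * deMoivre (m + j) j a := by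
  set f : PowerSeries ℂ := PowerSeries.mk fun j => if j = 0 then 0 else a j with hf
  have key : (PowerSeries.X : PowerSeries ℂ) *
        PowerSeries.mk (fun j => if j = 0 then 0 else a (j + 1))
      = f + PowerSeries.C (-a 1) * PowerSeries.X := by
    ext n
    cases n with
    | zero => simp [hf]
    | succ k =>
      rw [PowerSeries.coeff_succ_X_mul]
      cases k with
      | zero => simp [hf, PowerSeries.coeff_X, PowerSeries.coeff_C_mul]
      | succ k =>
        simp [hf, PowerSeries.coeff_X, PowerSeries.coeff_C_mul, Nat.succ_ne_zero]
  have h1 : deMoivre m ℓ (fun j => a (j + 1)) =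
      PowerSeries.coeff (m + ℓ) ((f + PowerSeries.C (-a 1) * PowerSeries.X) ^ ℓ) := by
    rw [← key, mul_pow, PowerSeries.coeff_X_pow_mul]
    rfl
  rw [h1, add_pow, map_sum]
  refine Finset.sum_congr rfl fun j hj => ?_
  have hjl : j ≤ ℓ := Nat.lt_succ_iff.mp (Finset.mem_range.mp hj)
  have : f ^ j * (PowerSeries.C (-a 1) * PowerSeries.X) ^ (ℓ - j) * (ℓ.choose j : PowerSeries ℂ)
      = PowerSeries.C ((-a 1) ^ (ℓ - j) * (ℓ.choose j : ℂ)) * (f ^ j * PowerSeries.X ^ (ℓ - j)) := by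
    rw [mul_pow, ← map_pow, ← map_natCast (PowerSeries.C (R := ℂ)) (ℓ.choose j), map_mul]
    ring
  rw [this, PowerSeries.coeff_C_mul]
  have hmn : m + ℓ = (m + j) + (ℓ - j) := by omega
  rw [hmn, PowerSeries.coeff_mul_X_pow]
  rfl
end

section
/- Define Q_r(k) for integers r ≥ 0, k ≥ 1 by Q_r(k) = r!·binom(−1/2, r)·binom(−1/k, 2)^(−r)·[x^{2r}] (1+x)^{1/2}·S(x)^{−1/2−r}, where S(x) = ((1+x)^{−1/k} − (1 − x/k))/(binom(−1/k,2)·x²) ∈ ℚ[[x]]. Then Q_1(k) = −(11k² + 11k + 2)/(24(k+1)). -/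
/-- For a power series `f` with constant term `1`, the power `f^α` for rational `α`,
defined by the binomial expansion `f^α = ∑_ℓ binom(α,ℓ)(f−1)^ℓ` (which is coefficientwise
a finite sum since `f − 1` has zero constant term). -/
noncomputable def fpow (f : PowerSeries ℚ) (α : ℚ) : PowerSeries ℚ :=
  PowerSeries.mk fun n =>
    ∑ ℓ ∈ Finset.range (n + 1), genBinomQ α ℓ * PowerSeries.coeff n ((f - 1) ^ ℓ)

/-- `Q_r(k) = r!·binom(−1/2,r)·binom(−1/k,2)^(−r)·[x^{2r}] (1+x)^{1/2} S(x)^{−1/2−r}`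
where `S(x) = ((1+x)^{−1/k} − (1 − x/k))/(binom(−1/k,2) x²)`. Then
`Q_1(k) = −(11k² + 11k + 2)/(24(k+1))`. -/
theorem Q_one_eval (k : ℕ) (hk : 1 ≤ k) (S : PowerSeries ℚ)
    (hS : PowerSeries.C (R := ℚ) (genBinomQ (-1 / k) 2) * PowerSeries.X ^ 2 * S =
      binSeries (-1 / k) - (1 - PowerSeries.C (R := ℚ) (1 / k) * PowerSeries.X)) :
    (Nat.factorial 1 : ℚ) * genBinomQ (-1 / 2) 1 * (genBinomQ (-1 / k) 2)⁻¹ ^ 1 *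
        PowerSeries.coeff 2 (binSeries (1 / 2) * fpow S (-1 / 2 - 1)) =
      -(11 * k ^ 2 + 11 * k + 2) / (24 * (k + 1)) := by
  have hk0 : (k : ℚ) ≠ 0 := Nat.cast_ne_zero.mpr (by omega)
  have hk1 : (k : ℚ) + 1 ≠ 0 := by positivity
  have hcval : genBinomQ (-1 / k) 2 = ((k : ℚ) + 1) / (2 * k ^ 2) := by
    unfold genBinomQ
    rw [Finset.prod_range_succ, Finset.prod_range_succ, Finset.prod_range_zero]
    rw [div_eq_div_iff (by norm_num [Nat.factorial]) (by positivity)]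
    field_simp
    ring
  have hcne : genBinomQ (-1 / k) 2 ≠ 0 := by
    rw [hcval]
    positivity
  -- coefficient extraction from hS
  have hcoeff : ∀ n : ℕ, genBinomQ (-1 / k) 2 * PowerSeries.coeff n S
      = genBinomQ (-1 / k) (n + 2) := by
    intro n
    have h := congrArg (PowerSeries.coeff (n + 2)) hS
    rw [mul_assoc, PowerSeries.coeff_C_mul, PowerSeries.coeff_X_pow_mul] at h
    rw [h]
    simp [binSeries, PowerSeries.coeff_mk, PowerSeries.coeff_one,
      PowerSeries.coeff_C_mul, PowerSeries.coeff_X]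
  have hs0 : PowerSeries.coeff 0 S = 1 := by
    have h := hcoeff 0
    have : genBinomQ (-1 / k) 2 * PowerSeries.coeff 0 S = genBinomQ (-1 / k) 2 * 1 := by
      rw [h, mul_one]
    exact mul_left_cancel₀ hcne this
  have hs1 : PowerSeries.coeff 1 S = genBinomQ (-1 / k) 3 / genBinomQ (-1 / k) 2 :=
    eq_div_of_mul_eq hcne (by rw [mul_comm]; exact hcoeff 1)
  have hs2 : PowerSeries.coeff 2 S = genBinomQ (-1 / k) 4 / genBinomQ (-1 / k) 2 :=
    eq_div_of_mul_eq hcne (by rw [mul_comm]; exact hcoeff 2)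
  -- coefficients of (S-1)^2
  have hT2 : PowerSeries.coeff 2 ((S - 1) ^ 2) = (PowerSeries.coeff 1 S) ^ 2 := by
    rw [sq, PowerSeries.coeff_mul, Finset.Nat.sum_antidiagonal_eq_sum_range_succ_mk]
    simp [Finset.sum_range_succ, PowerSeries.coeff_one, hs0]
    ring
  -- the product coefficient
  rw [PowerSeries.coeff_mul, Finset.Nat.sum_antidiagonal_eq_sum_range_succ_mk]
  simp only [binSeries, fpow, PowerSeries.coeff_mk]
  rw [Finset.sum_range_succ, Finset.sum_range_succ, Finset.sum_range_one]
  rw [Finset.sum_range_succ, Finset.sum_range_succ, Finset.sum_range_one]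
  rw [Finset.sum_range_succ, Finset.sum_range_one]
  rw [Finset.sum_range_one]
  norm_num [pow_zero, pow_one, PowerSeries.coeff_one, map_sub, hT2, hs0, hs1, hs2,
    genBinomQ, Finset.prod_range_succ, Finset.prod_range_zero, Nat.factorial]
  have hm1 : (-1 / (k : ℚ) - 1) ≠ 0 := by
    have h : (-1 / (k : ℚ) - 1) = -((k : ℚ) + 1) / k := by field_simp; ring
    rw [h]
    exact div_ne_zero (neg_ne_zero.mpr hk1) hk0
  have hm0 : (-1 / (k : ℚ)) ≠ 0 := div_ne_zero (by norm_num) hk0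
  have hm2 : (-1 - (k : ℚ)) ≠ 0 := by intro h; apply hk1; linarith
  field_simp
  ring
end
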